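/- Fix an integer d ≥ 2 and let a : ℤ/dℤ → ℂ. Then the following two conditions are equivalent: (i) for all i, j ∈ ℤ/dℤ, |⟨a|X^iZ^j|a⟩|² = (d·δ_{i,0}·δ_{j,0} + 1)/(d+1); (ii) for all i, k ∈ ℤ/dℤ, G(i,k) = (δ_{i,0} + δ_{k,0})/(d+1). -/

import Mathlib

open scoped BigOperators

/-- `ω = exp(2πi/d)`. -/
noncomputable def omeg (d : ℕ) : ℂ := Complex.exp (2 * Real.pi * Complex.I / d)

/-- The shift matrix `X`, with entries `X_{r,s} = δ_{r,s+1}`. -/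
def Xmat (d : ℕ) : Matrix (ZMod d) (ZMod d) ℂ :=
  fun r s => if r = s + 1 then 1 else 0

/-- The clock matrix `Z`, with entries `Z_{r,s} = ω^r δ_{r,s}`. -/
noncomputable def Zmat (d : ℕ) : Matrix (ZMod d) (ZMod d) ℂ :=
  fun r s => if r = s then omeg d ^ r.val else 0

/-- `⟨a|M|a⟩ = Σ_{r,s} conj(a_r)·M_{r,s}·a_s`. -/
noncomputable def overlap (d : ℕ) [NeZero d] (a : ZMod d → ℂ)
    (M : Matrix (ZMod d) (ZMod d) ℂ) : ℂ :=
  ∑ r : ZMod d, ∑ s : ZMod d, (starRingEnd ℂ) (a r) * M r s * a s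

/-- `G(i,k) = Σ_r conj(a_r)·conj(a_{r+k−i})·a_{r−i}·a_{r+k}`. -/
noncomputable def Gfun (d : ℕ) [NeZero d] (a : ZMod d → ℂ) (i k : ZMod d) : ℂ :=
  ∑ r : ZMod d,
    (starRingEnd ℂ) (a r) * (starRingEnd ℂ) (a (r + k - i)) * a (r - i) * a (r + k)
/-! For fixed `i`, `j ↦ |⟨a|X^iZ^j|a⟩|²` is the discrete Fourier transform of `k ↦ G(i,k)`:
expanding the square and shifting the summation variable by `k`, the clock phases combine to
`ω^{-jk}`. The right-hand sides of (i) and (ii) form a Fourier pair as well (a constant and a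
delta at `0`), so the equivalence is injectivity of the Fourier transform on `ℤ/dℤ`. -/

open ZMod

namespace ZMod

variable {N : ℕ} [NeZero N] {E : Type*} [AddCommGroup E] [Module ℂ E]

lemma dft_const_apply (c : E) (j : ZMod N) :
    𝓕 (fun _ ↦ c) j = if j = 0 then (N : ℂ) • c else 0 := by
  have hsum : ∑ k : ZMod N, stdAddChar (-(k * j)) = if j = 0 then (N : ℂ) else 0 := by
    simpa [mul_neg] using AddChar.sum_mulShift (-j) (isPrimitive_stdAddChar N)
  rw [dft_apply, ← Finset.sum_smul, hsum]
  split_ifs <;> simp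

lemma dft_single_zero (c : E) : 𝓕 (Pi.single 0 c : ZMod N → E) = fun _ ↦ c := by
  ext j
  simp [dft_apply, Pi.single_apply]

end ZMod

lemma omeg_pow_eq_stdAddChar (d : ℕ) [NeZero d] (n : ℕ) :
    omeg d ^ n = stdAddChar (n : ZMod d) := by
  rw [stdAddChar_apply, toCircle_natCast, omeg, ← Complex.exp_nat_mul]
  ring_nf

lemma Zmat_eq_diagonal (d : ℕ) : Zmat d = Matrix.diagonal fun r ↦ omeg d ^ r.val := by
  ext r s
  simp [Zmat, Matrix.diagonal_apply]

lemma Xmat_pow_apply (d : ℕ) [NeZero d] (n : ℕ) (r s : ZMod d) :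
    (Xmat d ^ n) r s = if r = s + n then 1 else 0 := by
  induction n generalizing r s with
  | zero => simp [Matrix.one_apply]
  | succ n ih =>
    rw [pow_succ, Matrix.mul_apply, Finset.sum_eq_single (s + 1)]
    · simp [ih, Xmat, add_assoc, add_comm (1 : ZMod d)]
    · intro b _ hb; simp [Xmat, hb]
    · simp

lemma Xmat_pow_mul_Zmat_pow_apply (d : ℕ) [NeZero d] (i j r s : ZMod d) :
    (Xmat d ^ i.val * Zmat d ^ j.val) r s = if r = s + i then stdAddChar (j * s) else 0 := by
  rw [Zmat_eq_diagonal, Matrix.diagonal_pow, Matrix.mul_diagonal, Xmat_pow_apply,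
    ZMod.natCast_zmod_val, Pi.pow_apply, ← pow_mul, omeg_pow_eq_stdAddChar]
  push_cast
  simp [mul_comm]

lemma overlap_Xmat_pow_mul_Zmat_pow (d : ℕ) [NeZero d] (a : ZMod d → ℂ) (i j : ZMod d) :
    overlap d a (Xmat d ^ i.val * Zmat d ^ j.val)
      = ∑ s, (starRingEnd ℂ) (a (s + i)) * stdAddChar (j * s) * a s := by
  rw [overlap, Finset.sum_comm]
  refine Finset.sum_congr rfl fun s _ ↦ ?_
  simp [Xmat_pow_mul_Zmat_pow_apply]

lemma Fintype.sum_mul_sum_eq_sum_sum_add {G R : Type*} [AddGroup G] [Fintype G]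
    [NonUnitalNonAssocSemiring R] (f g : G → R) :
    (∑ s, f s) * ∑ t, g t = ∑ k, ∑ s, f s * g (s + k) := by
  rw [Finset.sum_mul_sum, Finset.sum_comm (f := fun k s ↦ f s * g (s + k))]
  exact Finset.sum_congr rfl fun s _ ↦
    (Fintype.sum_equiv (Equiv.addLeft s) _ _ fun _ ↦ rfl).symm

lemma Gfun_eq_sum (d : ℕ) [NeZero d] (a : ZMod d → ℂ) (i k : ZMod d) :
    Gfun d a i k = ∑ s, (starRingEnd ℂ) (a (s + i)) * (starRingEnd ℂ) (a (s + k)) * a s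
      * a (s + k + i) := by
  rw [Gfun]
  exact Fintype.sum_equiv (Equiv.subRight i) _ _ fun r ↦ by
    simp only [Equiv.subRight_apply]
    ring_nf

lemma ofReal_norm_overlap_sq (d : ℕ) [NeZero d] (a : ZMod d → ℂ) (i j : ZMod d) :
    ((‖overlap d a (Xmat d ^ i.val * Zmat d ^ j.val)‖ ^ 2 : ℝ) : ℂ)
      = 𝓕 (Gfun d a i) j := by
  have hphase : ∀ s k : ZMod d,
      stdAddChar (j * s) * (starRingEnd ℂ) (stdAddChar (j * (s + k)))
        = stdAddChar (-(k * j)) := by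
    intro s k
    rw [← AddChar.map_neg_eq_conj, ← AddChar.map_add_eq_mul]
    ring_nf
  rw [Complex.ofReal_pow, ← Complex.mul_conj', overlap_Xmat_pow_mul_Zmat_pow, map_sum,
    Fintype.sum_mul_sum_eq_sum_sum_add, dft_apply]
  refine Finset.sum_congr rfl fun k _ ↦ ?_
  rw [Gfun_eq_sum, smul_eq_mul, Finset.mul_sum]
  refine Finset.sum_congr rfl fun s _ ↦ ?_
  rw [← hphase s k]
  simp only [map_mul, Complex.conj_conj]
  ring_nf

lemma dft_delta_add_delta_div (d : ℕ) [NeZero d] (i j : ZMod d) (c : ℂ) :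
    𝓕 (fun k : ZMod d ↦ ((if i = 0 then (1 : ℂ) else 0) + (if k = 0 then 1 else 0)) / c) j
      = ((d : ℂ) * (if i = 0 then 1 else 0) * (if j = 0 then 1 else 0) + 1) / c := by
  have hsplit :
      (fun k : ZMod d ↦ ((if i = 0 then (1 : ℂ) else 0) + (if k = 0 then 1 else 0)) / c)
        = (fun _ ↦ (if i = 0 then (1 : ℂ) else 0) / c) + Pi.single 0 (1 / c) := by
    ext k
    simp [Pi.single_apply, add_div, ite_div]
  rw [hsplit, map_add, Pi.add_apply, dft_const_apply, dft_single_zero]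
  split_ifs <;> simp only [smul_eq_mul] <;> ring

theorem stmt_15_general (d : ℕ) [NeZero d] (a : ZMod d → ℂ) :
    (∀ i j : ZMod d,
        (‖overlap d a (Xmat d ^ i.val * Zmat d ^ j.val)‖) ^ 2
          = ((d : ℝ) * (if i = 0 then 1 else 0) * (if j = 0 then 1 else 0) + 1) / ((d : ℝ) + 1))
    ↔
    (∀ i k : ZMod d,
        Gfun d a i k
          = ((if i = 0 then (1 : ℂ) else 0) + (if k = 0 then 1 else 0)) / ((d : ℂ) + 1)) := by
  calc _ ↔ ∀ i j, 𝓕 (Gfun d a i) j = 𝓕 (fun k ↦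
          ((if i = 0 then (1 : ℂ) else 0) + (if k = 0 then 1 else 0)) / (d + 1)) j := by
        refine forall₂_congr fun i j ↦ ?_
        rw [← Complex.ofReal_inj, ofReal_norm_overlap_sq, dft_delta_add_delta_div]
        push_cast [apply_ite]
        rfl
    _ ↔ _ := by
        refine forall_congr' fun i ↦ ?_
        rw [← funext_iff, ← funext_iff, dft.injective.eq_iff]

/-- For `d ≥ 2` and `a : ℤ/dℤ → ℂ`, the SIC overlap conditions
`|⟨a|X^iZ^j|a⟩|² = (d·δ_{i,0}·δ_{j,0} + 1)/(d+1)` for all `i, j` are equivalent to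
`G(i,k) = (δ_{i,0} + δ_{k,0})/(d+1)` for all `i, k`. -/
theorem stmt_15 (d : ℕ) [NeZero d] (hd : 2 ≤ d) (a : ZMod d → ℂ) :
    (∀ i j : ZMod d,
        (‖overlap d a (Xmat d ^ i.val * Zmat d ^ j.val)‖) ^ 2
          = ((d : ℝ) * (if i = 0 then 1 else 0) * (if j = 0 then 1 else 0) + 1) / ((d : ℝ) + 1))
    ↔
    (∀ i k : ZMod d,
        Gfun d a i k
          = ((if i = 0 then (1 : ℂ) else 0) + (if k = 0 then 1 else 0)) / ((d : ℂ) + 1)) :=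
  stmt_15_general d a
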